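/- arXiv:2012.14028 — 2 statements merged into one kernel-verified Lean document; each statement's English description precedes it below -/
import Mathlib

section
/- Let (U, Y) be an f-OTD reduction with gauge Φ in the full-rank case r = d, and suppose Y(t) is an invertible square matrix for every t. Then V̂(t) := U(t) * Y(t)ᵀ exactly satisfies the forced sensitivity equation: V̂'(t) = L(t)*V̂(t) + F(t) for all t. -/
open Matrix

/-- Finite-dimensional f-OTD setting (see paper, Section 2.2). -/

def FOTDReduction {n r d : ℕ}
    (L : ℝ → Matrix (Fin n) (Fin n) ℝ) (F : ℝ → Matrix (Fin n) (Fin d) ℝ)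
    (U : ℝ → Matrix (Fin n) (Fin r) ℝ) (Y : ℝ → Matrix (Fin d) (Fin r) ℝ)
    (Φ : ℝ → Matrix (Fin r) (Fin r) ℝ) : Prop :=
  (∀ t : ℝ, (Φ t)ᵀ = -Φ t) ∧
  (∀ t : ℝ, IsUnit ((Y t)ᵀ * Y t).det) ∧
  (∀ (t : ℝ) (i : Fin n) (j : Fin r),
    HasDerivAt (fun s => U s i j)
      (((L t * U t - U t * ((U t)ᵀ * L t * U t)
        + (1 - U t * (U t)ᵀ) * F t * Y t * ((Y t)ᵀ * Y t)⁻¹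
        + U t * Φ t : Matrix (Fin n) (Fin r) ℝ)) i j) t) ∧
  (∀ (t : ℝ) (i : Fin d) (j : Fin r),
    HasDerivAt (fun s => Y s i j)
      (((Y t * ((U t)ᵀ * L t * U t)ᵀ + (F t)ᵀ * U t + Y t * Φ t
        : Matrix (Fin d) (Fin r) ℝ)) i j) t)

/-! The product rule gives `(U Yᵀ)' = U' Yᵀ + U Y'ᵀ`. Once `Y (YᵀY)⁻¹ Yᵀ = 1`, which holds when
`Y` is square and invertible, the projection `(1 - UUᵀ)F` of the forcing recombines with the
`UUᵀF` coming from `Y'`, the reduced-operator terms `U L_r Yᵀ` cancel, and the gauge terms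
cancel by skew-symmetry of `Φ`, leaving `L (U Yᵀ) + F`. -/

theorem Matrix.hasDerivAt_mul_apply {𝕜 : Type*} [NontriviallyNormedField 𝕜]
    {l m p : Type*} [Fintype m] {A : 𝕜 → Matrix l m 𝕜} {B : 𝕜 → Matrix m p 𝕜}
    {A' : Matrix l m 𝕜} {B' : Matrix m p 𝕜} {t : 𝕜}
    (hA : ∀ i k, HasDerivAt (fun s => A s i k) (A' i k) t)
    (hB : ∀ k j, HasDerivAt (fun s => B s k j) (B' k j) t) (i : l) (j : p) :
    HasDerivAt (fun s => (A s * B s) i j) ((A' * B t + A t * B') i j) t := by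
  simp only [mul_apply, add_apply, ← Finset.sum_add_distrib]
  exact HasDerivAt.fun_sum fun k _ => (hA i k).mul (hB k j)

theorem Matrix.mul_inv_transpose_mul_self_mul_transpose {R : Type*} [CommRing R]
    {m : Type*} [Fintype m] [DecidableEq m] {Y : Matrix m m R} (hY : IsUnit Y.det) :
    Y * (Yᵀ * Y)⁻¹ * Yᵀ = 1 := by
  rw [mul_inv_rev, ← Matrix.mul_assoc, mul_nonsing_inv _ hY, Matrix.one_mul,
    nonsing_inv_mul _ (by rwa [det_transpose])]

theorem fOTD_velocity_mul_transpose_add {R : Type*} [CommRing R]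
    {n d r : Type*} [Fintype n] [Fintype d] [Fintype r] [DecidableEq n] [DecidableEq d]
    (L : Matrix n n R) (F : Matrix n d R) (U : Matrix n r R) (Y : Matrix d r R)
    (Φ Lr G : Matrix r r R) (hΦ : Φᵀ = -Φ) (hG : Y * G * Yᵀ = 1) :
    (L * U - U * Lr + (1 - U * Uᵀ) * F * Y * G + U * Φ) * Yᵀ
      + U * (Y * Lrᵀ + Fᵀ * U + Y * Φ)ᵀ = L * (U * Yᵀ) + F := by
  rw [Matrix.mul_assoc] at hG
  simp only [transpose_add, transpose_mul, transpose_transpose, hΦ, Matrix.add_mul,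
    Matrix.sub_mul, Matrix.mul_add, Matrix.mul_neg, Matrix.neg_mul, Matrix.mul_assoc, hG,
    Matrix.mul_one, Matrix.one_mul]
  abel

/-- Full-rank case `r = d`: if the coefficient matrix `Y(t)` is an invertible square
matrix for every `t`, then the low-rank approximation `V̂(t) = U(t) Y(t)ᵀ` exactly
satisfies the forced sensitivity equation `V̂' = L V̂ + F`. -/
theorem fOTD_fullRank_exact {n d : ℕ}
    (L : ℝ → Matrix (Fin n) (Fin n) ℝ) (F : ℝ → Matrix (Fin n) (Fin d) ℝ)
    (U : ℝ → Matrix (Fin n) (Fin d) ℝ) (Y : ℝ → Matrix (Fin d) (Fin d) ℝ)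
    (Φ : ℝ → Matrix (Fin d) (Fin d) ℝ)
    (hred : FOTDReduction L F U Y Φ)
    (hYinv : ∀ t : ℝ, IsUnit (Y t).det) :
    ∀ (t : ℝ) (i : Fin n) (j : Fin d),
      HasDerivAt (fun s => (U s * (Y s)ᵀ) i j)
        (((L t * (U t * (Y t)ᵀ) + F t : Matrix (Fin n) (Fin d) ℝ)) i j) t := by
  obtain ⟨hΦ, -, hU, hY⟩ := hred
  intro t i j
  have hYt : ∀ k l, HasDerivAt (fun s => (Y s)ᵀ k l)
      ((Y t * ((U t)ᵀ * L t * U t)ᵀ + (F t)ᵀ * U t + Y t * Φ t)ᵀ k l) t :=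
    fun k l => hY t l k
  have hprod := hasDerivAt_mul_apply (hU t) hYt i j
  rwa [fOTD_velocity_mul_transpose_add _ _ _ _ _ _ _ (hΦ t)
    (mul_inv_transpose_mul_self_mul_transpose (hYinv t))] at hprod
end

section
/- Let Φ, Φ̃ : ℝ → Matrix (Fin r) (Fin r) ℝ be continuous with Φ(t)ᵀ = -Φ(t) and Φ̃(t)ᵀ = -Φ̃(t) for all t, and let R : ℝ → Matrix (Fin r) (Fin r) ℝ be continuously differentiable and satisfy the matrix ODE R'(t) = R(t)*Φ(t) - Φ̃(t)*R(t). If R(0) is orthogonal, i.e., R(0)ᵀ*R(0) = 1, then R(t) is orthogonal for all t ≥ 0, i.e., R(t)ᵀ*R(t) = 1 and R(t)*R(t)ᵀ = 1. -/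
/-!
The Gram matrix `H = Rᵀ R` obeys the Lax equation `H' = ⁅H, Φ⁆`: transposing `R' = R Φ - Φ̃ R`
and using skew-symmetry, the two `Φ̃` terms cancel. Hence so does `G = H - 1`, and then
`tr (G²)` is conserved, since `tr (G ⁅G, Φ⁆) = 0` by cyclicity of the trace. As `G` is symmetric,
`tr (G²)` is the squared Frobenius norm of `G`, which vanishes at `0` and therefore everywhere.
-/

open Matrix

namespace Matrix

section Algebra

variable {m n α : Type*} [Fintype m] [Fintype n] [CommRing α]

theorem transpose_mul_add_transpose_mul_eq_lie {R : Matrix m n α} {Φ : Matrix n n α}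
    {Ψ : Matrix m m α} (hΦ : Φᵀ = -Φ) (hΨ : Ψᵀ = -Ψ) :
    (R * Φ - Ψ * R)ᵀ * R + Rᵀ * (R * Φ - Ψ * R) = ⁅Rᵀ * R, Φ⁆ := by
  simp only [transpose_sub, transpose_mul, hΦ, hΨ, Ring.lie_def, Matrix.neg_mul, Matrix.mul_neg,
    Matrix.sub_mul, Matrix.mul_sub, Matrix.mul_assoc]
  abel

theorem trace_mul_lie_self (A B : Matrix n n α) : trace (A * ⁅A, B⁆) = 0 := by
  rw [Ring.lie_def, mul_sub, trace_sub, ← Matrix.mul_assoc A B A, trace_mul_comm (A * B) A,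
    sub_self]

end Algebra

section Calculus

variable {𝕜 𝔸 : Type*} [NontriviallyNormedField 𝕜] [NormedRing 𝔸] [NormedAlgebra 𝕜 𝔸]
  {l m n : Type*} [Fintype m] {t : 𝕜}

theorem hasDerivAt_mul_apply_s8 {A : 𝕜 → Matrix l m 𝔸} {B : 𝕜 → Matrix m n 𝔸}
    {A' : Matrix l m 𝔸} {B' : Matrix m n 𝔸}
    (hA : ∀ i j, HasDerivAt (fun s => A s i j) (A' i j) t)
    (hB : ∀ i j, HasDerivAt (fun s => B s i j) (B' i j) t) (i : l) (j : n) :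
    HasDerivAt (fun s => (A s * B s) i j) ((A' * B t + A t * B') i j) t := by
  simp only [mul_apply, add_apply, ← Finset.sum_add_distrib]
  exact HasDerivAt.fun_sum fun k _ => (hA i k).mul (hB k j)

theorem hasDerivAt_trace {A : 𝕜 → Matrix m m 𝔸} {A' : Matrix m m 𝔸}
    (hA : ∀ i j, HasDerivAt (fun s => A s i j) (A' i j) t) :
    HasDerivAt (fun s => trace (A s)) (trace A') t :=
  HasDerivAt.fun_sum fun i _ => hA i i

end Calculus

theorem trace_mul_self_eq_of_hasDerivAt_lie {𝕜 n : Type*} [RCLike 𝕜] [Fintype n]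
    {G Φ : 𝕜 → Matrix n n 𝕜}
    (hG : ∀ (t : 𝕜) (i j : n), HasDerivAt (fun s => G s i j) (⁅G t, Φ t⁆ i j) t) (t u : 𝕜) :
    trace (G t * G t) = trace (G u * G u) := by
  have hderiv : ∀ s, HasDerivAt (fun s => trace (G s * G s)) 0 s := fun s => by
    have h := hasDerivAt_trace (hasDerivAt_mul_apply_s8 (hG s) (hG s))
    rwa [trace_add, trace_mul_comm, trace_mul_lie_self, add_zero] at h
  exact is_const_of_deriv_eq_zero (fun s => (hderiv s).differentiableAt)
    (fun s => (hderiv s).deriv) t u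

theorem eq_zero_of_trace_mul_self_eq_zero {n : Type*} [Fintype n] {A : Matrix n n ℝ}
    (hA : Aᵀ = A) (h : trace (A * A) = 0) : A = 0 := by
  rw [← trace_conjTranspose_mul_self_eq_zero_iff, conjTranspose_eq_transpose_of_trivial, hA]
  exact h

end Matrix

theorem rotation_flow_preserves_orthogonality_general {r : ℕ}
    (Φ Φt : ℝ → Matrix (Fin r) (Fin r) ℝ)
    (hΦ : ∀ t : ℝ, (Φ t)ᵀ = -Φ t)
    (hΦt : ∀ t : ℝ, (Φt t)ᵀ = -Φt t)
    (R : ℝ → Matrix (Fin r) (Fin r) ℝ) (R' : ℝ → Matrix (Fin r) (Fin r) ℝ)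
    (hR : ∀ (t : ℝ) (i j : Fin r), HasDerivAt (fun s => R s i j) (R' t i j) t)
    (hode : ∀ t : ℝ, R' t = R t * Φ t - Φt t * R t)
    (h0 : (R 0)ᵀ * R 0 = 1) :
    ∀ t : ℝ, 0 ≤ t → (R t)ᵀ * R t = 1 ∧ R t * (R t)ᵀ = 1 := by
  intro t _
  set G : ℝ → Matrix (Fin r) (Fin r) ℝ := fun s => (R s)ᵀ * R s - 1
  have hG : ∀ (s : ℝ) (i j : Fin r), HasDerivAt (fun u => G u i j) (⁅G s, Φ s⁆ i j) s := by
    intro s i j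
    have hRtr : ∀ i j, HasDerivAt (fun u => (R u)ᵀ i j) ((R' s)ᵀ i j) s := fun i j => hR s j i
    have h := (hasDerivAt_mul_apply_s8 hRtr (hR s) i j).sub_const ((1 : Matrix _ _ ℝ) i j)
    have hlie : ⁅G s, Φ s⁆ = ⁅(R s)ᵀ * R s, Φ s⁆ := by
      simp only [G, Ring.lie_def]; noncomm_ring
    rw [hlie, ← transpose_mul_add_transpose_mul_eq_lie (hΦ s) (hΦt s), ← hode]
    exact h
  have hGt : G t = 0 := by
    refine eq_zero_of_trace_mul_self_eq_zero (by simp [G]) ?_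
    rw [trace_mul_self_eq_of_hasDerivAt_lie hG t 0]
    simp [G, h0]
  have hRt : (R t)ᵀ * R t = 1 := sub_eq_zero.mp hGt
  exact ⟨hRt, mul_eq_one_comm.mp hRt⟩

/-- The rotation-matrix flow `R' = R Φ - Φ̃ R` relating two f-OTD reductions with
skew-symmetric gauges `Φ` and `Φ̃` preserves orthogonality of `R`: if `R(0)ᵀ R(0) = 1`,
then `R(t)ᵀ R(t) = 1` and `R(t) R(t)ᵀ = 1` for all `t ≥ 0`. -/
theorem rotation_flow_preserves_orthogonality {r : ℕ}
    (Φ Φt : ℝ → Matrix (Fin r) (Fin r) ℝ)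
    (hΦc : ∀ i j, Continuous fun t => Φ t i j)
    (hΦtc : ∀ i j, Continuous fun t => Φt t i j)
    (hΦ : ∀ t : ℝ, (Φ t)ᵀ = -Φ t)
    (hΦt : ∀ t : ℝ, (Φt t)ᵀ = -Φt t)
    (R : ℝ → Matrix (Fin r) (Fin r) ℝ) (R' : ℝ → Matrix (Fin r) (Fin r) ℝ)
    (hR : ∀ (t : ℝ) (i j : Fin r), HasDerivAt (fun s => R s i j) (R' t i j) t)
    (hR'c : ∀ i j, Continuous fun t => R' t i j)
    (hode : ∀ t : ℝ, R' t = R t * Φ t - Φt t * R t)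
    (h0 : (R 0)ᵀ * R 0 = 1) :
    ∀ t : ℝ, 0 ≤ t → (R t)ᵀ * R t = 1 ∧ R t * (R t)ᵀ = 1 :=
  rotation_flow_preserves_orthogonality_general Φ Φt hΦ hΦt R R' hR hode h0
end
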